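/- arXiv:2510.20903 — 2 statements merged into one kernel-verified Lean document; each statement's English description precedes it below -/
import Mathlib

section
/- Let X be a random vector on ℝ^D with a twice continuously differentiable density p whose Laplacian Δp is integrable, such that the Fourier inversion formula holds for p. Let Ψ be a random vector independent of X with E[Ψ] = 0 and covariance matrix equal to the identity, and for σ² > 0 let p_{σ²} denote the density of X + σΨ. Then for every point z ∈ ℝ^D, p_{σ²}(z) = p(z) + (σ²/2) Δp(z) + o(σ²) as σ² → 0⁺; in particular, the one-sided derivative of σ² ↦ p_{σ²}(z) at σ² = 0⁺ equals (1/2) Δp(z). -/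
/-!
Taylor-expand `p (z - √s • w)` to second order around `z`. Averaging over the noise, the linear
term vanishes because the noise is centred, and the quadratic term becomes `(s / 2) Δp z` because
its covariance is the identity. The remainder is `o(s ‖w‖²)` for each fixed `w`, by continuity of
the Hessian, and `O(s ‖w‖²)` uniformly in `w` because `p` is bounded; boundedness is where Fourier
inversion enters, as `|p| ≤ ‖𝓕 p‖₁`. Dominated convergence against the integrable `‖w‖²` then
makes the averaged remainder `o(s)`.
-/

open MeasureTheory Real Filter Set Asymptotics
open scoped Topology RealInnerProductSpace ENNReal FourierTransform

noncomputable section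

/-- The density of `X + √s • Ψ` where `X` has Lebesgue density `p` and the noise `Ψ`
has law `μ` (the convolution of `p` with the law of `√s • Ψ`). -/
def smoothed {D : ℕ} (p : EuclideanSpace ℝ (Fin D) → ℝ)
    (μ : Measure (EuclideanSpace ℝ (Fin D))) (s : ℝ)
    (z : EuclideanSpace ℝ (Fin D)) : ℝ :=
  ∫ w, p (z - Real.sqrt s • w) ∂μ

/-- The Laplacian `Δf(x) = Σ_j ∂²f/∂x_j²` of a function on `ℝ^D`. -/
def laplacian {D : ℕ} (f : EuclideanSpace ℝ (Fin D) → ℝ)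
    (x : EuclideanSpace ℝ (Fin D)) : ℝ :=
  ∑ j : Fin D, fderiv ℝ (fun y => fderiv ℝ f y (EuclideanSpace.single j 1)) x
      (EuclideanSpace.single j 1)

section Taylor

variable {E F : Type*} [NormedAddCommGroup E] [NormedSpace ℝ E] [NormedAddCommGroup F]
  [NormedSpace ℝ F]

def taylorRemainderTwo (f : E → F) (x v : E) : F :=
  f (x + v) - f x - fderiv ℝ f x v - (2 : ℝ)⁻¹ • fderiv ℝ (fderiv ℝ f) x v v

theorem continuous_taylorRemainderTwo {f : E → F} (hf : Continuous f) (x : E) :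
    Continuous (taylorRemainderTwo f x) := by
  unfold taylorRemainderTwo
  fun_prop

theorem norm_sub_le_of_hasDerivAt_of_norm_second_deriv_le {φ ψ ψ' : ℝ → F} {K : ℝ}
    (hφ : ∀ t, HasDerivAt φ (ψ t) t) (hψ : ∀ t, HasDerivAt ψ (ψ' t) t) (hψ0 : ψ 0 = 0)
    (hK : ∀ t ∈ Icc (0 : ℝ) 1, ‖ψ' t‖ ≤ K) :
    ‖φ 1 - φ 0‖ ≤ K := by
  have hψ_le : ∀ t ∈ Icc (0 : ℝ) 1, ‖ψ t‖ ≤ K := fun t ht => by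
    have := (convex_Icc (0 : ℝ) 1).norm_image_sub_le_of_norm_hasDerivWithin_le
      (fun s _ => (hψ s).hasDerivWithinAt) hK (left_mem_Icc.2 zero_le_one) ht
    rw [hψ0, sub_zero, sub_zero, Real.norm_of_nonneg ht.1] at this
    have hK0 : 0 ≤ K := (norm_nonneg _).trans (hK 0 (left_mem_Icc.2 zero_le_one))
    nlinarith [ht.2]
  simpa using (convex_Icc (0 : ℝ) 1).norm_image_sub_le_of_norm_hasDerivWithin_le
    (fun s _ => (hφ s).hasDerivWithinAt) hψ_le (left_mem_Icc.2 zero_le_one)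
    (right_mem_Icc.2 zero_le_one)

theorem norm_taylorRemainderTwo_le {f : E → F} (hf : ContDiff ℝ 2 f) {x v : E} {M : ℝ}
    (hM : ∀ t ∈ Icc (0 : ℝ) 1, ‖fderiv ℝ (fderiv ℝ f) (x + t • v) - fderiv ℝ (fderiv ℝ f) x‖ ≤ M) :
    ‖taylorRemainderTwo f x v‖ ≤ M * ‖v‖ ^ 2 := by
  set B := fderiv ℝ (fderiv ℝ f) x
  have hf1 : Differentiable ℝ f := hf.differentiable (by norm_num)
  have hf2 : Differentiable ℝ (fderiv ℝ f) :=
    (hf.fderiv_right (m := 1) (by norm_num)).differentiable one_ne_zero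
  have hline : ∀ t : ℝ, HasDerivAt (fun t : ℝ => x + t • v) v t := fun t => by
    simpa using ((hasDerivAt_id t).smul_const v).const_add x
  let φ : ℝ → F := fun t => f (x + t • v) - t • fderiv ℝ f x v - (t ^ 2 / 2) • B v v
  let ψ : ℝ → F := fun t => fderiv ℝ f (x + t • v) v - fderiv ℝ f x v - t • B v v
  have hφ : ∀ t, HasDerivAt φ (ψ t) t := fun t => by
    have h1 := (hf1 _).hasFDerivAt.comp_hasDerivAt t (hline t)
    have h2 := ((hasDerivAt_pow 2 t).div_const 2).smul_const (B v v)
    refine ((h1.sub ((hasDerivAt_id t).smul_const (fderiv ℝ f x v))).sub h2).congr_deriv ?_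
    simp [ψ]
  have hψ : ∀ t, HasDerivAt ψ ((fderiv ℝ (fderiv ℝ f) (x + t • v) - B) v v) t := fun t => by
    have h1 := (hf2 _).hasFDerivAt.comp_hasDerivAt t (hline t)
    refine (((h1.clm_apply (hasDerivAt_const t v)).sub_const (fderiv ℝ f x v)).sub
      ((hasDerivAt_id t).smul_const (B v v))).congr_deriv ?_
    simp
  have hR : φ 1 - φ 0 = taylorRemainderTwo f x v := by
    simp [φ, taylorRemainderTwo, B]; abel
  rw [← hR]
  refine norm_sub_le_of_hasDerivAt_of_norm_second_deriv_le hφ hψ (by simp [ψ]) fun t ht => ?_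
  calc _ ≤ ‖fderiv ℝ (fderiv ℝ f) (x + t • v) - B‖ * ‖v‖ * ‖v‖ :=
        ContinuousLinearMap.le_opNorm₂ _ _ _
    _ ≤ M * ‖v‖ * ‖v‖ := by gcongr; exact hM t ht
    _ = M * ‖v‖ ^ 2 := by ring

theorem taylorRemainderTwo_isLittleO {f : E → F} (hf : ContDiff ℝ 2 f) (x : E) :
    taylorRemainderTwo f x =o[𝓝 0] fun v => ‖v‖ ^ 2 := by
  have hcont : Continuous (fderiv ℝ (fderiv ℝ f)) :=
    (hf.fderiv_right (m := 1) (by norm_num)).continuous_fderiv one_ne_zero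
  refine isLittleO_iff.2 fun c hc => ?_
  obtain ⟨δ, hδ, hball⟩ :=
    (Metric.continuousAt_iff (f := fderiv ℝ (fderiv ℝ f)) (a := x)).1 hcont.continuousAt c hc
  filter_upwards [Metric.ball_mem_nhds (0 : E) hδ] with v hv
  rw [Real.norm_of_nonneg (by positivity)]
  refine norm_taylorRemainderTwo_le hf fun t ht => ?_
  -- `dist` and `‖· - ·‖` on `E →L[ℝ] E →L[ℝ] F` agree only after unfolding instances
  refine (dist_eq_norm (E := E →L[ℝ] E →L[ℝ] F) _ _ ▸ hball ?_).le
  rw [mem_ball_zero_iff] at hv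
  rw [dist_eq_norm, add_sub_cancel_left, norm_smul, Real.norm_of_nonneg ht.1]
  exact (mul_le_of_le_one_left (norm_nonneg v) ht.2).trans_lt hv

theorem norm_taylorRemainderTwo_le_of_bounded {f : E → F} {C : ℝ} (hC : ∀ y, ‖f y‖ ≤ C)
    (x v : E) :
    ‖taylorRemainderTwo f x v‖ ≤
      2 * C + ‖fderiv ℝ f x‖ * ‖v‖ + ‖fderiv ℝ (fderiv ℝ f) x‖ * ‖v‖ ^ 2 := by
  have hL := (fderiv ℝ f x).le_opNorm v
  have hB : ‖(2 : ℝ)⁻¹ • fderiv ℝ (fderiv ℝ f) x v v‖ ≤ ‖fderiv ℝ (fderiv ℝ f) x‖ * ‖v‖ ^ 2 := by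
    rw [norm_smul, sq, ← mul_assoc]
    refine (mul_le_of_le_one_left (norm_nonneg _) (by norm_num)).trans ?_
    exact (fderiv ℝ (fderiv ℝ f) x).le_opNorm₂ v v
  unfold taylorRemainderTwo
  linarith [norm_sub_le (f (x + v) - f x - fderiv ℝ f x v)
      ((2 : ℝ)⁻¹ • fderiv ℝ (fderiv ℝ f) x v v),
    norm_sub_le (f (x + v) - f x) (fderiv ℝ f x v), norm_sub_le (f (x + v)) (f x),
    hC (x + v), hC x]

theorem exists_norm_taylorRemainderTwo_le {f : E → F} (hf : ContDiff ℝ 2 f) {C : ℝ}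
    (hC : ∀ y, ‖f y‖ ≤ C) (x : E) :
    ∃ K, ∀ v, ‖taylorRemainderTwo f x v‖ ≤ K * ‖v‖ ^ 2 := by
  obtain ⟨δ, hδ, hnear⟩ := Metric.eventually_nhds_iff_ball.1
    ((taylorRemainderTwo_isLittleO hf x).def zero_lt_one)
  set r := min δ 1
  have hr : 0 < r := lt_min hδ one_pos
  set A := 2 * C + ‖fderiv ℝ f x‖ + ‖fderiv ℝ (fderiv ℝ f) x‖
  have hC0 : 0 ≤ C := (norm_nonneg _).trans (hC x)
  have hA : 0 ≤ A := by positivity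
  refine ⟨1 + A / r ^ 2, fun v => ?_⟩
  rcases lt_or_ge ‖v‖ r with hv | hv
  · have := hnear v (mem_ball_zero_iff.2 (hv.trans_le (min_le_left _ _)))
    rw [one_mul, Real.norm_of_nonneg (by positivity)] at this
    nlinarith [div_nonneg hA (sq_nonneg r), sq_nonneg ‖v‖]
  · have hr1 : r ≤ 1 := min_le_right _ _
    -- for `‖v‖ ≥ r` with `r ≤ 1`, `q` dominates each of `1`, `‖v‖`, `‖v‖ ^ 2` in the crude bound
    set q := ‖v‖ ^ 2 / r ^ 2
    have hq1 : 1 ≤ q := by rw [one_le_div (by positivity)]; nlinarith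
    have hq2 : ‖v‖ ≤ q := by
      rw [le_div_iff₀ (by positivity)]
      nlinarith [mul_le_mul_of_nonneg_left hr1 hr.le, mul_le_mul_of_nonneg_left hv (norm_nonneg v)]
    have hq3 : ‖v‖ ^ 2 ≤ q := le_div_self (sq_nonneg _) (by positivity) (by nlinarith)
    calc ‖taylorRemainderTwo f x v‖
        ≤ 2 * C + ‖fderiv ℝ f x‖ * ‖v‖ + ‖fderiv ℝ (fderiv ℝ f) x‖ * ‖v‖ ^ 2 :=
          norm_taylorRemainderTwo_le_of_bounded hC x v
      _ ≤ A * q := by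
          nlinarith [mul_le_mul_of_nonneg_left hq1 hC0,
            mul_le_mul_of_nonneg_left hq2 (norm_nonneg (fderiv ℝ f x)),
            mul_le_mul_of_nonneg_left hq3 (norm_nonneg (fderiv ℝ (fderiv ℝ f) x))]
      _ ≤ (1 + A / r ^ 2) * ‖v‖ ^ 2 := by
          have : A * q = A / r ^ 2 * ‖v‖ ^ 2 := by ring
          nlinarith [sq_nonneg ‖v‖]

theorem tendsto_taylorRemainderTwo_neg_sqrt_smul_div {f : E → ℝ} (hf : ContDiff ℝ 2 f) (x w : E) :
    Tendsto (fun s => taylorRemainderTwo f x ((-√s) • w) / s) (𝓝[>] 0) (𝓝 0) := by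
  have hv : Tendsto (fun s : ℝ => (-√s) • w) (𝓝[>] 0) (𝓝 0) := by
    have : Continuous fun s : ℝ => (-√s) • w := by fun_prop
    simpa using this.continuousWithinAt.tendsto (s := Ioi 0) (x := 0)
  have hsq : (fun s : ℝ => ‖(-√s) • w‖ ^ 2) =O[𝓝[>] 0] fun s => s := by
    refine IsBigO.of_bound (‖w‖ ^ 2) ?_
    filter_upwards [self_mem_nhdsWithin] with s hs
    rw [norm_smul, norm_neg, mul_pow, Real.norm_of_nonneg (sqrt_nonneg s), sq_sqrt hs.out.le,
      norm_mul, norm_pow, norm_norm, mul_comm]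
  exact (((taylorRemainderTwo_isLittleO hf x).comp_tendsto hv).trans_isBigO hsq)
    |>.tendsto_div_nhds_zero

end Taylor

section Moments

variable {E : Type*} [NormedAddCommGroup E] [InnerProductSpace ℝ E]

theorem inner_mul_inner_eq_polarization (k k' w : E) :
    ⟪k, w⟫ * ⟪k', w⟫ = (⟪k + k', w⟫ ^ 2 - ⟪k - k', w⟫ ^ 2) / 4 := by
  rw [inner_add_left, inner_sub_left]; ring

variable [MeasurableSpace E]

def HasIdentityCovariance (μ : Measure E) : Prop :=
  ∀ k : E, ∫ w, ⟪k, w⟫ ^ 2 ∂μ = ‖k‖ ^ 2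

namespace HasIdentityCovariance

variable {μ : Measure E} (hcov : HasIdentityCovariance μ)
include hcov

theorem integrable_inner_sq (k : E) : Integrable (fun w => ⟪k, w⟫ ^ 2) μ := by
  -- a non-integrable square would have Bochner integral `0`, forcing `k = 0`
  by_contra h
  have hk : k = 0 := by simpa [integral_undef h, eq_comm] using hcov k
  simp [hk] at h

theorem integrable_inner_mul_inner (k k' : E) : Integrable (fun w => ⟪k, w⟫ * ⟪k', w⟫) μ := by
  simp_rw [inner_mul_inner_eq_polarization]
  exact ((hcov.integrable_inner_sq _).sub (hcov.integrable_inner_sq _)).div_const 4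

theorem integral_inner_mul_inner (k k' : E) : ∫ w, ⟪k, w⟫ * ⟪k', w⟫ ∂μ = ⟪k, k'⟫ := by
  simp_rw [inner_mul_inner_eq_polarization]
  rw [integral_div, integral_sub (hcov.integrable_inner_sq _) (hcov.integrable_inner_sq _),
    hcov, hcov, norm_add_sq_real, norm_sub_sq_real]
  ring

theorem integrable_norm_sq [FiniteDimensional ℝ E] : Integrable (fun w => ‖w‖ ^ 2) μ := by
  let b := stdOrthonormalBasis ℝ E
  have h : ∀ w : E, ‖w‖ ^ 2 = ∑ i, ⟪b i, w⟫ * ⟪b i, w⟫ := fun w => by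
    rw [← real_inner_self_eq_norm_sq, ← b.sum_inner_mul_inner]
    simp_rw [real_inner_comm w]
  simp_rw [h]
  exact integrable_finsetSum _ fun i _ => hcov.integrable_inner_mul_inner _ _

theorem integral_apply_apply_self {ι : Type*} [Fintype ι] (b : OrthonormalBasis ι ℝ E)
    (B : E →L[ℝ] E →L[ℝ] ℝ) : ∫ w, B w w ∂μ = ∑ i, B (b i) (b i) := by
  have hexpand : ∀ w, B w w = ∑ i, ∑ j, ⟪b i, w⟫ * ⟪b j, w⟫ * B (b i) (b j) := fun w => by
    conv_lhs => rw [← b.sum_repr' w]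
    simp only [map_sum, _root_.map_smul, sum_apply, smul_apply, smul_eq_mul, Finset.mul_sum]
    rw [Finset.sum_comm]
    exact Finset.sum_congr rfl fun i _ => Finset.sum_congr rfl fun j _ => by ring
  have hint : ∀ i j, Integrable (fun w => ⟪b i, w⟫ * ⟪b j, w⟫ * B (b i) (b j)) μ :=
    fun i j => (hcov.integrable_inner_mul_inner _ _).mul_const _
  calc ∫ w, B w w ∂μ = ∑ i, ∑ j, (∫ w, ⟪b i, w⟫ * ⟪b j, w⟫ ∂μ) * B (b i) (b j) := by
        simp_rw [hexpand]
        rw [integral_finsetSum _ fun i _ => integrable_finsetSum _ fun j _ => hint i j]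
        refine Finset.sum_congr rfl fun i _ => ?_
        rw [integral_finsetSum _ fun j _ => hint i j]
        exact Finset.sum_congr rfl fun j _ => integral_mul_const _ _
    _ = ∑ i, B (b i) (∑ j, ⟪b j, b i⟫ • b j) := by
        simp_rw [hcov.integral_inner_mul_inner, map_sum, _root_.map_smul, smul_eq_mul,
          real_inner_comm]
    _ = ∑ i, B (b i) (b i) := by simp_rw [b.sum_repr']

theorem integrable_apply_apply_self [FiniteDimensional ℝ E] [OpensMeasurableSpace E]
    (B : E →L[ℝ] E →L[ℝ] ℝ) : Integrable (fun w => B w w) μ := by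
  refine (hcov.integrable_norm_sq.const_mul ‖B‖).mono'
    (by fun_prop : Continuous fun w => B w w).aestronglyMeasurable (ae_of_all _ fun w => ?_)
  simpa [sq, mul_assoc] using B.le_opNorm₂ w w

theorem integrable_id [FiniteDimensional ℝ E] [OpensMeasurableSpace E] [IsFiniteMeasure μ] :
    Integrable (fun w => w) μ :=
  ((memLp_two_iff_integrable_sq_norm aestronglyMeasurable_id).2
    hcov.integrable_norm_sq).integrable one_le_two

end HasIdentityCovariance

end Moments

section Smoothing

variable {E : Type*} [NormedAddCommGroup E] [InnerProductSpace ℝ E] [FiniteDimensional ℝ E]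
  [MeasurableSpace E] [BorelSpace E] {μ : Measure E} [IsProbabilityMeasure μ]
  {ι : Type*} [Fintype ι] {f : E → ℝ} {C : ℝ}

theorem integral_taylorRemainderTwo_smul (hmean : ∫ w, w ∂μ = 0)
    (hcov : HasIdentityCovariance μ) (b : OrthonormalBasis ι ℝ E) (hf : Continuous f)
    (hC : ∀ y, |f y| ≤ C) (x : E) (t : ℝ) :
    ∫ w, taylorRemainderTwo f x (t • w) ∂μ =
      ∫ w, f (x + t • w) ∂μ - f x - t ^ 2 / 2 * ∑ i, fderiv ℝ (fderiv ℝ f) x (b i) (b i) := by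
  set L := fderiv ℝ f x
  set B := fderiv ℝ (fderiv ℝ f) x
  have hfint : Integrable (fun w => f (x + t • w)) μ :=
    (integrable_const C).mono'
      (by fun_prop : Continuous fun w => f (x + t • w)).aestronglyMeasurable
      (ae_of_all _ fun w => (Real.norm_eq_abs _).trans_le (hC _))
  have hLint : Integrable (fun w => t * L w) μ := (L.integrable_comp hcov.integrable_id).const_mul t
  have hBint : Integrable (fun w => 2⁻¹ * (t ^ 2 * B w w)) μ :=
    ((hcov.integrable_apply_apply_self B).const_mul _).const_mul _
  have hL0 : ∫ w, t * L w ∂μ = 0 := by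
    rw [integral_const_mul, L.integral_comp_comm hcov.integrable_id, hmean, map_zero, mul_zero]
  have hpt : ∀ w, taylorRemainderTwo f x (t • w) =
      f (x + t • w) - f x - t * L w - 2⁻¹ * (t ^ 2 * B w w) := fun w => by
    simp [taylorRemainderTwo, L, B]; ring
  have h1 : Integrable (fun w => f (x + t • w) - f x) μ := hfint.sub (integrable_const _)
  have h2 : Integrable (fun w => f (x + t • w) - f x - t * L w) μ := h1.sub hLint
  simp_rw [hpt]
  rw [integral_sub h2 hBint, integral_sub h1 hLint, integral_sub hfint (integrable_const _),
    hL0, integral_const_mul, integral_const_mul, hcov.integral_apply_apply_self b B]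
  simp; ring

theorem isLittleO_integral_sub_sqrt_smul_sub_taylor (hmean : ∫ w, w ∂μ = 0)
    (hcov : HasIdentityCovariance μ) (b : OrthonormalBasis ι ℝ E) (hf : ContDiff ℝ 2 f)
    (hC : ∀ y, |f y| ≤ C) (x : E) :
    (fun s => ∫ w, f (x - √s • w) ∂μ - f x - s / 2 * ∑ i, fderiv ℝ (fderiv ℝ f) x (b i) (b i))
      =o[𝓝[>] 0] fun s => s := by
  obtain ⟨K, hK⟩ := exists_norm_taylorRemainderTwo_le hf (C := C)
    (fun y => (Real.norm_eq_abs _).trans_le (hC y)) x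
  have hrepr : ∀ s, 0 ≤ s → ∫ w, taylorRemainderTwo f x ((-√s) • w) ∂μ =
      ∫ w, f (x - √s • w) ∂μ - f x - s / 2 * ∑ i, fderiv ℝ (fderiv ℝ f) x (b i) (b i) := by
    intro s hs
    rw [integral_taylorRemainderTwo_smul hmean hcov b hf.continuous hC, neg_sq, sq_sqrt hs]
    simp [neg_smul, ← sub_eq_add_neg]
  have hdom : ∀ s > 0, ∀ w, ‖taylorRemainderTwo f x ((-√s) • w) / s‖ ≤ K * ‖w‖ ^ 2 := by
    intro s hs w
    rw [norm_div, Real.norm_of_nonneg hs.le, div_le_iff₀ hs]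
    refine (hK _).trans_eq ?_
    rw [norm_smul, norm_neg, mul_pow, Real.norm_of_nonneg (sqrt_nonneg s), sq_sqrt hs.le]
    ring
  have hlim : Tendsto (fun s => ∫ w, taylorRemainderTwo f x ((-√s) • w) / s ∂μ) (𝓝[>] 0) (𝓝 0) := by
    simpa using tendsto_integral_filter_of_dominated_convergence (l := 𝓝[>] (0 : ℝ))
      (fun w => K * ‖w‖ ^ 2)
      (Eventually.of_forall fun s => (((continuous_taylorRemainderTwo hf.continuous x).comp
        (continuous_const_smul _)).div_const s).aestronglyMeasurable)
      (eventually_mem_nhdsWithin.mono fun s hs => ae_of_all _ (hdom s hs))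
      (hcov.integrable_norm_sq.const_mul K)
      (ae_of_all _ (tendsto_taylorRemainderTwo_neg_sqrt_smul_div hf x))
  rw [isLittleO_iff_tendsto' (eventually_mem_nhdsWithin.mono fun s hs h => absurd h hs.out.ne')]
  refine hlim.congr' (eventually_mem_nhdsWithin.mono fun s hs => ?_)
  rw [integral_div, hrepr s hs.out.le]

end Smoothing

theorem abs_le_integral_norm_fourier_of_fourierInv_fourier_eq {V : Type*}
    [NormedAddCommGroup V] [InnerProductSpace ℝ V] [FiniteDimensional ℝ V] [MeasurableSpace V]
    [BorelSpace V] {f : V → ℝ} (hf : ∀ x, 𝓕⁻ (𝓕 (fun y => (f y : ℂ))) x = (f x : ℂ)) (x : V) :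
    |f x| ≤ ∫ ξ, ‖𝓕 (fun y => (f y : ℂ)) ξ‖ := by
  have h : ‖𝓕⁻ (𝓕 (fun y => (f y : ℂ))) x‖ ≤ ∫ ξ, ‖𝓕 (fun y => (f y : ℂ)) ξ‖ :=
    VectorFourier.norm_fourierIntegral_le_integral_norm _ _ _ _ _
  rwa [hf, Complex.norm_real, Real.norm_eq_abs] at h

theorem laplacian_eq_sum_fderiv_fderiv {D : ℕ} {f : EuclideanSpace ℝ (Fin D) → ℝ}
    {x : EuclideanSpace ℝ (Fin D)} (hf : DifferentiableAt ℝ (fderiv ℝ f) x) :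
    laplacian f x = ∑ j, fderiv ℝ (fderiv ℝ f) x (EuclideanSpace.basisFun (Fin D) ℝ j)
      (EuclideanSpace.basisFun (Fin D) ℝ j) := by
  unfold laplacian
  refine Finset.sum_congr rfl fun j _ => ?_
  rw [fderiv_clm_apply hf (differentiableAt_const _)]
  simp

theorem smoothed_density_expansion_general
    (D : ℕ) (p : EuclideanSpace ℝ (Fin D) → ℝ)
    (μ : Measure (EuclideanSpace ℝ (Fin D))) [IsProbabilityMeasure μ]
    -- p is a twice continuously differentiable probability density
    (hp2 : ContDiff ℝ 2 p)
    -- the Fourier inversion formula holds for p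
    (hFourier : ∀ z, 𝓕⁻ (𝓕 (fun x => (p x : ℂ))) z = (p z : ℂ))
    -- Ψ has zero mean and identity covariance
    (hmean : ∫ w, w ∂μ = 0)
    (hcov : ∀ k : EuclideanSpace ℝ (Fin D), ∫ w, ⟪k, w⟫ ^ 2 ∂μ = ‖k‖ ^ 2) :
    ∀ z : EuclideanSpace ℝ (Fin D),
      ((fun s : ℝ => smoothed p μ s z - p z - s / 2 * laplacian p z)
          =o[𝓝[>] (0 : ℝ)] (fun s : ℝ => s)) ∧
      HasDerivWithinAt (fun s : ℝ => smoothed p μ s z)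
        ((1 / 2) * laplacian p z) (Ici (0 : ℝ)) 0 := by
  intro z
  have hlap := laplacian_eq_sum_fderiv_fderiv (x := z)
    ((hp2.fderiv_right (m := 1) (by norm_num)).differentiable one_ne_zero z)
  have hO : (fun s : ℝ => smoothed p μ s z - p z - s / 2 * laplacian p z)
      =o[𝓝[>] (0 : ℝ)] (fun s : ℝ => s) := by
    rw [hlap]
    exact isLittleO_integral_sub_sqrt_smul_sub_taylor hmean hcov _ hp2
      (abs_le_integral_norm_fourier_of_fourierInv_fourier_eq hFourier) z
  have h0 : smoothed p μ 0 z = p z := by simp [smoothed]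
  refine ⟨hO, hasDerivWithinAt_Ioi_iff_Ici.1 (hasDerivWithinAt_iff_isLittleO.2 ?_)⟩
  simp only [h0, sub_zero, smul_eq_mul]
  exact hO.congr_left fun s => by ring

/-- pointwise heat-type expansion for arbitrary isotropic noise:
`p_{σ²}(z) = p(z) + (σ²/2) Δp(z) + o(σ²)` as `σ² → 0⁺`, and in particular the one-sided
derivative of `σ² ↦ p_{σ²}(z)` at `σ² = 0⁺` equals `(1/2) Δp(z)`. -/
theorem smoothed_density_expansion
    (D : ℕ) (p : EuclideanSpace ℝ (Fin D) → ℝ)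
    (μ : Measure (EuclideanSpace ℝ (Fin D))) [IsProbabilityMeasure μ]
    -- p is a twice continuously differentiable probability density
    (hp2 : ContDiff ℝ 2 p)
    (hp0 : ∀ x, 0 ≤ p x) (hp1 : ∫ x, p x = 1) (hpi : Integrable p)
    -- the Laplacian of p is integrable
    (hΔ : Integrable (laplacian p))
    -- the Fourier inversion formula holds for p
    (hFourier : ∀ z, 𝓕⁻ (𝓕 (fun x => (p x : ℂ))) z = (p z : ℂ))
    -- Ψ has zero mean and identity covariance
    (hmean : ∫ w, w ∂μ = 0)
    (hcov : ∀ k : EuclideanSpace ℝ (Fin D), ∫ w, ⟪k, w⟫ ^ 2 ∂μ = ‖k‖ ^ 2) :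
    ∀ z : EuclideanSpace ℝ (Fin D),
      ((fun s : ℝ => smoothed p μ s z - p z - s / 2 * laplacian p z)
          =o[𝓝[>] (0 : ℝ)] (fun s : ℝ => s)) ∧
      HasDerivWithinAt (fun s : ℝ => smoothed p μ s z)
        ((1 / 2) * laplacian p z) (Ici (0 : ℝ)) 0 :=
  smoothed_density_expansion_general D p μ hp2 hFourier hmean hcov
end
end

section
/- Define sigmoid(x) = 1/(1 + e^{−x}), softplus(x) = log(1 + e^x), and expm1(x) = e^x − 1 on ℝ. For real numbers γ_s and γ_t, set σ²(γ) = sigmoid(γ) and α²(γ) = sigmoid(−γ) (the variance-preserving parameterization, so σ²(γ) + α²(γ) = 1). Then the sampling variance σ²_{t|s} := σ²(γ_t) − (α²(γ_t)/α²(γ_s)) σ²(γ_s) satisfies the numerically stable identity σ²_{t|s} = −expm1( softplus(γ_s) − softplus(γ_t) ). -/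
noncomputable section

/-- The logistic sigmoid `sigmoid(x) = 1/(1 + e^{−x})`. -/
def sigmoid (x : ℝ) : ℝ := 1 / (1 + Real.exp (-x))

/-- The softplus function `softplus(x) = log(1 + e^x)`. -/
def softplus (x : ℝ) : ℝ := Real.log (1 + Real.exp x)

/-- `expm1(x) = e^x − 1`. -/
def expm1 (x : ℝ) : ℝ := Real.exp x - 1

/-- numerically stable form of the sampling variance: in the
variance-preserving parameterization `σ²(γ) = sigmoid(γ)`, `α²(γ) = sigmoid(−γ)`,
the transition variance `σ²_{t|s} = σ²(γ_t) − (α²(γ_t)/α²(γ_s)) σ²(γ_s)` satisfies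
`σ²_{t|s} = −expm1(softplus(γ_s) − softplus(γ_t))`. -/
theorem sampling_variance_expm1_softplus (γs γt : ℝ) :
    sigmoid γt - (sigmoid (-γt) / sigmoid (-γs)) * sigmoid γs =
      -expm1 (softplus γs - softplus γt) := by
  have hs : (0:ℝ) < 1 + Real.exp γs := by positivity
  have ht : (0:ℝ) < 1 + Real.exp γt := by positivity
  have hs' : (0:ℝ) < 1 + Real.exp (-γs) := by positivity
  have ht' : (0:ℝ) < 1 + Real.exp (-γt) := by positivity
  unfold sigmoid softplus expm1
  rw [Real.exp_sub, Real.exp_log hs, Real.exp_log ht]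
  simp only [Real.exp_neg]
  have h1 := (Real.exp_pos γs).ne'
  have h2 := (Real.exp_pos γt).ne'
  field_simp
  ring
end
end
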